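/- arXiv:2402.15353 — 4 statements merged into one kernel-verified Lean document; each statement's English description precedes it below -/
import Mathlib

section
/- For a phase object x ∈ 𝕋^d, writing f^j_0 = |f^j_0| e^{iφ_j} with |f^j_0| > 0 and a^j = d F^{-1}(0, f^j_1, …, f^j_{d−1}), the argument φ_j satisfies for every ℓ ∈ [d] the equation Re(a^j_ℓ) cos(φ_j) + Im(a^j_ℓ) sin(φ_j) = (d² − |a^j_ℓ|² − |f^j_0|²) / (2|f^j_0|). -/
open Complex Finset

noncomputable def dft (d : ℕ) [NeZero d] (x : ZMod d → ℂ) (j : ZMod d) : ℂ :=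
  ∑ k : ZMod d, Complex.exp (-(2 * Real.pi * Complex.I * k.val * j.val / d)) * x k

/-- The Fourier transform of the j-th diagonal x ∘ S_j conj(x). -/
noncomputable def diagDFT (d : ℕ) [NeZero d] (x : ZMod d → ℂ) (j k : ZMod d) : ℂ :=
  dft d (fun ℓ => x ℓ * (starRingEnd ℂ) (x (ℓ + j))) k

/-- a^j_ℓ = Σ_{k≠0} e^{2πi ℓk/d} f^j_k. -/
noncomputable def aVec (d : ℕ) [NeZero d] (x : ZMod d → ℂ) (j ℓ : ZMod d) : ℂ :=
  ∑ k ∈ Finset.univ.erase (0 : ZMod d),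
    Complex.exp (2 * Real.pi * Complex.I * ℓ.val * k.val / d) * diagDFT d x j k

/-!
Proof idea: by Fourier inversion, `a^j_ℓ + f^j_0 = d · x_ℓ · conj x_{ℓ+j}`, which has modulus `d`
since `x` is a phase object. Expanding `d² = |a^j_ℓ + f^j_0|² = |a^j_ℓ|² + |f^j_0|² +
2 Re(a^j_ℓ · conj f^j_0)` and writing `f^j_0 = |f^j_0| e^{iφ_j}` gives the equation.
-/

namespace Complex

open ComplexConjugate

theorem re_mul_conj_eq_norm_mul (A F : ℂ) (hF : F ≠ 0) :
    (A * conj F).re = ‖F‖ * (A.re * Real.cos (arg F) + A.im * Real.sin (arg F)) := by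
  rw [cos_arg hF, sin_arg, mul_re, conj_re, conj_im]
  field_simp [norm_ne_zero_iff.mpr hF]
  ring

theorem re_mul_cos_arg_add_im_mul_sin_arg (A F : ℂ) (hF : F ≠ 0) :
    A.re * Real.cos (arg F) + A.im * Real.sin (arg F)
      = (‖A + F‖ ^ 2 - ‖A‖ ^ 2 - ‖F‖ ^ 2) / (2 * ‖F‖) := by
  have hF' : ‖F‖ ≠ 0 := norm_ne_zero_iff.mpr hF
  rw [Complex.sq_norm, Complex.sq_norm, Complex.sq_norm, normSq_add,
    re_mul_conj_eq_norm_mul A F hF]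
  field_simp
  ring

end Complex

namespace ZMod

variable {d : ℕ} [NeZero d]

theorem stdAddChar_mul_eq_exp (k j : ZMod d) :
    stdAddChar (k * j) = exp (2 * Real.pi * I * k.val * j.val / d) := by
  rw [show k * j = ((k.val * j.val : ℕ) : ZMod d) by simp, stdAddChar_apply, toCircle_natCast]
  push_cast
  ring_nf

theorem dft_eq_zmod_dft (y : ZMod d → ℂ) : _root_.dft d y = 𝓕 y := by
  ext j
  refine Finset.sum_congr rfl fun k _ => ?_
  rw [smul_eq_mul, AddChar.map_neg_eq_inv, stdAddChar_mul_eq_exp, exp_neg]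

theorem sum_exp_mul_dft (y : ZMod d → ℂ) (ℓ : ZMod d) :
    ∑ k : ZMod d, exp (2 * Real.pi * I * ℓ.val * k.val / d) * _root_.dft d y k = d * y ℓ := by
  have hinv := congrFun (dft.symm_apply_apply y) ℓ
  rw [invDFT_apply, smul_eq_mul, inv_mul_eq_iff_eq_mul₀ (NeZero.ne _)] at hinv
  rw [← hinv, dft_eq_zmod_dft]
  refine Finset.sum_congr rfl fun k _ => ?_
  rw [smul_eq_mul, mul_comm k, stdAddChar_mul_eq_exp]

end ZMod

open ComplexConjugate in
theorem aVec_add_diagDFT_zero (d : ℕ) [NeZero d] (x : ZMod d → ℂ) (j ℓ : ZMod d) :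
    aVec d x j ℓ + diagDFT d x j 0 = d * (x ℓ * conj (x (ℓ + j))) := by
  rw [aVec, ← ZMod.sum_exp_mul_dft (fun m => x m * conj (x (m + j))) ℓ,
    ← Finset.sum_erase_add _ _ (Finset.mem_univ 0)]
  simp [diagDFT]

/-- The argument φ_j of f^j_0 solves the linear system \(A^j (\cos φ, \sin φ)^T = …\). -/
theorem phase_linear_system (d : ℕ) [NeZero d] (x : ZMod d → ℂ)
    (hx : ∀ k : ZMod d, ‖x k‖ = 1) (j : ZMod d)
    (hf0 : diagDFT d x j 0 ≠ 0) :
    ∀ ℓ : ZMod d,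
      (aVec d x j ℓ).re * Real.cos (Complex.arg (diagDFT d x j 0))
        + (aVec d x j ℓ).im * Real.sin (Complex.arg (diagDFT d x j 0))
      = ((d : ℝ) ^ 2 - ‖aVec d x j ℓ‖ ^ 2 - ‖diagDFT d x j 0‖ ^ 2)
          / (2 * ‖diagDFT d x j 0‖) := by
  intro ℓ
  have hnorm : ‖aVec d x j ℓ + diagDFT d x j 0‖ = d := by
    simp [aVec_add_diagDFT_zero, hx]
  rw [Complex.re_mul_cos_arg_add_im_mul_sin_arg _ _ hf0, hnorm]
end

section
/- If j is coprime with d and the diagonal x ∘ S_j conj(x) of a phase object x ∈ 𝕋^d is constant with value e^{iφ}, then φ ∈ (2π/d)ℤ, and x is, up to a global phase factor, equal to the vector (e^{2πi k m/d})_{k∈[d]} for some integer m. -/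
open Complex
open scoped ComplexConjugate

/-!
Since `‖x k‖ = 1`, the hypothesis says `x (k + j) = ω * x k` with `ω = conj (exp (φ i))`, hence
`x (k + n j) = ωⁿ x k`. Taking `n = d` gives `ωᵈ = 1`, which pins `φ` to `2π m / d`, so that
`ω = e(-m)` for the standard character `e(a) = exp (2π i a / d)` of `ZMod d`. Since `j` is a unit,
every `k` is `n j` with `n = k j⁻¹`, and `x k = ωⁿ x 0 = e(-m k j⁻¹) x 0`.
-/

lemma eq_conj_mul_of_mul_conj_eq {z w c : ℂ} (hz : ‖z‖ = 1) (h : z * conj w = c) :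
    w = conj c * z := by
  have hzz : conj z * z = 1 := by
    rw [mul_comm, mul_conj, normSq_eq_norm_sq, hz]; norm_num
  rw [← h, map_mul, conj_conj]
  linear_combination (-w) * hzz

lemma apply_add_nsmul_of_apply_add {G M : Type*} [AddMonoid G] [Monoid M] {f : G → M} {a : G}
    {ω : M} (h : ∀ k, f (k + a) = ω * f k) (k : G) (n : ℕ) :
    f (k + n • a) = ω ^ n * f k := by
  induction n with
  | zero => simp
  | succ n ih => rw [succ_nsmul, ← add_assoc, h, ih, ← mul_assoc, ← pow_succ']

lemma exists_int_eq_of_exp_mul_I_pow_eq_one {θ : ℝ} {d : ℕ} (hd : d ≠ 0)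
    (h : exp (θ * I) ^ d = 1) : ∃ m : ℤ, θ = 2 * Real.pi * m / d := by
  rw [← exp_nat_mul, exp_eq_one_iff] at h
  obtain ⟨m, hm⟩ := h
  refine ⟨m, ?_⟩
  have hm' : ((d * θ : ℝ) : ℂ) = ((m * (2 * Real.pi) : ℝ) : ℂ) := by
    push_cast
    exact mul_right_cancel₀ I_ne_zero (by linear_combination hm)
  have hdR : (d : ℝ) ≠ 0 := Nat.cast_ne_zero.mpr hd
  field_simp
  linarith [ofReal_injective hm']

lemma ZMod.apply_eq_addChar_mul {d : ℕ} [NeZero d] {M : Type*} [CommMonoid M]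
    (ψ : AddChar (ZMod d) M) {f : ZMod d → M} {a a' b : ZMod d} (ha : a * a' = 1)
    (h : ∀ k, f (k + a) = ψ b * f k) (k : ZMod d) :
    f k = ψ (k * a' * b) * f 0 := by
  have hk : (k * a').val • a = k := by
    rw [nsmul_eq_mul, ZMod.natCast_zmod_val, mul_assoc, mul_comm a', ha, mul_one]
  have := apply_add_nsmul_of_apply_add h 0 (k * a').val
  rwa [zero_add, hk, ← ψ.map_nsmul_eq_pow, nsmul_eq_mul, ZMod.natCast_zmod_val] at this

lemma ZMod.exp_two_pi_I_val_mul_div_eq_stdAddChar {d : ℕ} [NeZero d] (k : ZMod d) (M : ℤ) :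
    exp (2 * Real.pi * I * k.val * M / d) = ZMod.stdAddChar (k * (M : ZMod d)) := by
  have hk : ((k.val * M : ℤ) : ZMod d) = k * (M : ZMod d) := by
    push_cast
    rw [ZMod.natCast_zmod_val]
  rw [← hk, ZMod.stdAddChar_coe]
  push_cast
  congr 1
  ring

/-- If j is coprime with d and the j-th diagonal of a phase object is constant e^{iφ},
then φ ∈ (2π/d)ℤ and x is a modulation vector up to global phase. -/
theorem constant_diagonal_modulation (d : ℕ) [NeZero d] (j : ℕ) (hj : Nat.Coprime j d)
    (x : ZMod d → ℂ) (hx : ∀ k : ZMod d, ‖x k‖ = 1) (φ : ℝ)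
    (h : ∀ k : ZMod d, x k * (starRingEnd ℂ) (x (k + (j : ZMod d)))
      = Complex.exp (φ * Complex.I)) :
    (∃ m : ℤ, φ = 2 * Real.pi * m / d)
    ∧ ∃ (α : ℂ) (m : ℤ), ‖α‖ = 1 ∧
        ∀ k : ZMod d, x k = α * Complex.exp (2 * Real.pi * Complex.I * k.val * m / d) := by
  have hstep (k : ZMod d) : x (k + j) = conj (exp (φ * I)) * x k :=
    eq_conj_mul_of_mul_conj_eq (hx k) (h k)
  have hpow : exp (φ * I) ^ d = 1 := by
    have hx0 : x 0 ≠ 0 := norm_ne_zero_iff.mp (by simp [hx 0])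
    have := apply_add_nsmul_of_apply_add hstep 0 d
    rwa [nsmul_eq_mul, ZMod.natCast_self, zero_mul, add_zero, eq_comm, mul_eq_right₀ hx0,
      ← map_pow, map_eq_one_iff _ (RingHom.injective _)] at this
  obtain ⟨m, hφ⟩ := exists_int_eq_of_exp_mul_I_pow_eq_one (NeZero.ne d) hpow
  have hchar : conj (exp (φ * I)) = ZMod.stdAddChar ((-m : ℤ) : ZMod d) := by
    rw [ZMod.stdAddChar_coe, ← exp_conj, hφ]
    congr 1
    simp only [map_mul, conj_ofReal, conj_I]
    push_cast
    ring
  refine ⟨⟨m, hφ⟩, x 0, -m * ((j : ZMod d)⁻¹).val, hx 0, fun k ↦ ?_⟩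
  rw [ZMod.apply_eq_addChar_mul (f := x) _ (ZMod.coe_mul_inv_eq_one j hj) (hchar ▸ hstep) k,
    mul_comm, ZMod.exp_two_pi_I_val_mul_div_eq_stdAddChar]
  push_cast
  rw [ZMod.natCast_zmod_val]
  congr 2
  ring
end

section
/- If j is coprime with d, then a phase object x ∈ 𝕋^d is uniquely determined up to global phase by its j-th diagonal: if x, y ∈ 𝕋^d satisfy x ∘ S_j conj(x) = y ∘ S_j conj(y), then x = α y for some α ∈ ℂ with |α| = 1. -/
/-!
The ratio `x k * conj (y k)` of the two phase objects is invariant under the shift `k ↦ k + j`: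
the equality of the `j`-th diagonals, multiplied by `conj (y k) * x (k + j)`, says exactly this once
the unit-modulus factors are cancelled. As `j` is a unit of `ZMod d`, the shifts by `j` reach every
index, so the ratio is a constant phase `α`, and `x = α y`.
-/

open Function

theorem mul_star_eq_mul_star_of_mem_unitary {R : Type*} [CommMonoid R] [StarMul R] {a b c e : R}
    (hb : b ∈ unitary R) (hc : c ∈ unitary R) (h : a * star b = c * star e) :
    a * star c = b * star e :=
  calc a * star c = a * star b * b * star c := by
        rw [mul_assoc a, Unitary.star_mul_self_of_mem hb, mul_one]
    _ = star e * b * (c * star c) := by rw [h]; ac_rfl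
    _ = b * star e := by rw [Unitary.mul_star_self_of_mem hc, mul_one, mul_comm]

theorem Function.Periodic.eq_apply_zero_of_isUnit {α : Type*} {n : ℕ} {f : ZMod n → α}
    {c : ZMod n} (hf : Periodic f c) (hc : IsUnit c) (k : ZMod n) : f k = f 0 := by
  obtain ⟨u, rfl⟩ := hc
  have hk : k = ((ZMod.cast (k * (↑u⁻¹ : ZMod n)) : ℤ) : ZMod n) * u := by
    rw [ZMod.intCast_zmod_cast, mul_assoc, Units.inv_mul, mul_one]
  rw [hk, hf.int_mul_eq]

theorem ZMod.exists_mem_unitary_mul_eq_of_mul_star_shift_eq {R : Type*} [CommMonoid R]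
    [StarMul R] {n : ℕ} {c : ZMod n} (hc : IsUnit c) {x y : ZMod n → R}
    (hx : ∀ k, x k ∈ unitary R) (hy : ∀ k, y k ∈ unitary R)
    (h : ∀ k, x k * star (x (k + c)) = y k * star (y (k + c))) :
    ∃ α ∈ unitary R, ∀ k, x k = α * y k := by
  have hratio : Periodic (fun k => x k * star (y k)) c := fun k =>
    (mul_star_eq_mul_star_of_mem_unitary (hx (k + c)) (hy k) (h k)).symm
  refine ⟨x 0 * star (y 0), mul_mem (hx 0) (Unitary.star_mem (hy 0)), fun k => ?_⟩
  rw [← hratio.eq_apply_zero_of_isUnit hc k, mul_assoc, Unitary.star_mul_self_of_mem (hy k),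
    mul_one]

theorem RCLike.mem_unitary_iff_norm_eq_one {𝕜 : Type*} [RCLike 𝕜] {z : 𝕜} :
    z ∈ unitary 𝕜 ↔ ‖z‖ = 1 := by
  refine ⟨CStarRing.norm_of_mem_unitary, fun hz => Unitary.mem_iff_self_mul_star.mpr ?_⟩
  rw [RCLike.star_def, RCLike.mul_conj, hz, RCLike.ofReal_one, one_pow]

theorem unique_recovery_coprime_general (d : ℕ) (j : ℕ) (hj : Nat.Coprime j d)
    (x y : ZMod d → ℂ)
    (hx : ∀ k : ZMod d, ‖x k‖ = 1)
    (hy : ∀ k : ZMod d, ‖y k‖ = 1)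
    (h : ∀ k : ZMod d,
      x k * (starRingEnd ℂ) (x (k + (j : ZMod d)))
        = y k * (starRingEnd ℂ) (y (k + (j : ZMod d)))) :
    ∃ α : ℂ, ‖α‖ = 1 ∧ ∀ k : ZMod d, x k = α * y k := by
  obtain ⟨α, hα, hxy⟩ := ZMod.exists_mem_unitary_mul_eq_of_mul_star_shift_eq
    (ZMod.unitOfCoprime j hj).isUnit (fun k => RCLike.mem_unitary_iff_norm_eq_one.mpr (hx k))
    (fun k => RCLike.mem_unitary_iff_norm_eq_one.mpr (hy k)) h
  exact ⟨α, RCLike.mem_unitary_iff_norm_eq_one.mp hα, hxy⟩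

/-- If j is coprime with d, a phase object is determined up to global phase by its j-th diagonal. -/
theorem unique_recovery_coprime (d : ℕ) [NeZero d] (j : ℕ) (hj : Nat.Coprime j d)
    (x y : ZMod d → ℂ)
    (hx : ∀ k : ZMod d, ‖x k‖ = 1)
    (hy : ∀ k : ZMod d, ‖y k‖ = 1)
    (h : ∀ k : ZMod d,
      x k * (starRingEnd ℂ) (x (k + (j : ZMod d)))
        = y k * (starRingEnd ℂ) (y (k + (j : ZMod d)))) :
    ∃ α : ℂ, ‖α‖ = 1 ∧ ∀ k : ZMod d, x k = α * y k :=
  unique_recovery_coprime_general d j hj x y hx hy h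
end

section
/- If j is not coprime with d, then the j-th diagonal does not determine x up to global phase: for every x ∈ ℂ^d there exists x̃ ∈ ℂ^d with x̃ ∘ S_j conj(x̃) = x ∘ S_j conj(x) and |x̃_k| = |x_k| for all k, but x̃ is not a unimodular scalar multiple of x (provided x is nowhere zero). -/
/-!
The shift by `j` fixes each coset of the kernel of the reduction `ZMod d → ZMod (gcd j d)`,
a proper subgroup since `gcd j d > 1`. Flipping the sign of `x` off that kernel therefore leaves
every product `x k * conj (x (k + j))` and every modulus unchanged, while `0` and `1` lie in
different cosets, so the new vector is not a global phase times `x`.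
-/

open ComplexConjugate

section

variable {A : Type*}

theorem mul_conj_shift_of_unimodular_periodic [Add A] {c : A → ℂ} {j : A}
    (hc : ∀ k, ‖c k‖ = 1) (hper : ∀ k, c (k + j) = c k) (x : A → ℂ) (k : A) :
    c k * x k * conj (c (k + j) * x (k + j)) = x k * conj (x (k + j)) := by
  have hck : c k * conj (c k) = 1 := by
    rw [Complex.mul_conj, Complex.normSq_eq_norm_sq, hc]; norm_num
  rw [hper, map_mul]
  linear_combination x k * conj (x (k + j)) * hck

theorem not_exists_mul_eq_const_mul {c x : A → ℂ} (hx : ∀ k, x k ≠ 0) {a b : A}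
    (hab : c a ≠ c b) : ¬ ∃ α : ℂ, ∀ k, c k * x k = α * x k := by
  rintro ⟨α, hα⟩
  exact hab ((mul_left_injective₀ (hx a) (hα a)).trans (mul_left_injective₀ (hx b) (hα b)).symm)

variable {B : Type*} [AddZeroClass A] [AddZeroClass B] [DecidableEq B]

def kerSign (φ : A →+ B) (k : A) : ℂ := if φ k = 0 then 1 else -1

theorem norm_kerSign (φ : A →+ B) (k : A) : ‖kerSign φ k‖ = 1 := by
  unfold kerSign; split_ifs <;> simp

theorem kerSign_add_of_map_eq_zero (φ : A →+ B) {j : A} (hj : φ j = 0) (k : A) :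
    kerSign φ (k + j) = kerSign φ k := by
  simp only [kerSign, map_add, hj, add_zero]

theorem kerSign_zero_ne (φ : A →+ B) {a : A} (ha : φ a ≠ 0) : kerSign φ 0 ≠ kerSign φ a := by
  simp only [kerSign, map_zero, ha, if_true, if_false]; norm_num

end

theorem ZMod.castHom_gcd_natCast_eq_zero (j d : ℕ) :
    ZMod.castHom (Nat.gcd_dvd_right j d) (ZMod (j.gcd d)) j = 0 := by
  rw [map_natCast, ZMod.natCast_eq_zero_iff]
  exact Nat.gcd_dvd_left j d

theorem no_unique_recovery_not_coprime_general (d : ℕ) (j : ℕ)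
    (hj : 1 < Nat.gcd j d) (x : ZMod d → ℂ) (hx : ∀ k : ZMod d, x k ≠ 0) :
    ∃ xt : ZMod d → ℂ,
      (∀ k : ZMod d,
        xt k * (starRingEnd ℂ) (xt (k + (j : ZMod d)))
          = x k * (starRingEnd ℂ) (x (k + (j : ZMod d))))
      ∧ (∀ k : ZMod d, ‖xt k‖ = ‖x k‖)
      ∧ ¬ ∃ α : ℂ, ‖α‖ = 1 ∧ ∀ k : ZMod d, xt k = α * x k := by
  have : Fact (1 < j.gcd d) := ⟨hj⟩
  let ψ := ZMod.castHom (Nat.gcd_dvd_right j d) (ZMod (j.gcd d))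
  let φ := ψ.toAddMonoidHom
  have hφ1 : φ 1 ≠ 0 := show ψ 1 ≠ 0 from ψ.map_one ▸ one_ne_zero
  have hper := kerSign_add_of_map_eq_zero φ (ZMod.castHom_gcd_natCast_eq_zero j d)
  refine ⟨fun k => kerSign φ k * x k,
    mul_conj_shift_of_unimodular_periodic (norm_kerSign φ) hper x, fun k => ?_, ?_⟩
  · rw [norm_mul, norm_kerSign, one_mul]
  · rintro ⟨α, -, hα⟩
    exact not_exists_mul_eq_const_mul hx (kerSign_zero_ne φ hφ1) ⟨α, hα⟩

/-- If j is not coprime with d, the j-th diagonal does not determine a nonvanishing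
object up to global phase. -/
theorem no_unique_recovery_not_coprime (d : ℕ) [NeZero d] (j : ℕ) (hjd : j < d)
    (hj : 1 < Nat.gcd j d) (x : ZMod d → ℂ) (hx : ∀ k : ZMod d, x k ≠ 0) :
    ∃ xt : ZMod d → ℂ,
      (∀ k : ZMod d,
        xt k * (starRingEnd ℂ) (xt (k + (j : ZMod d)))
          = x k * (starRingEnd ℂ) (x (k + (j : ZMod d))))
      ∧ (∀ k : ZMod d, ‖xt k‖ = ‖x k‖)
      ∧ ¬ ∃ α : ℂ, ‖α‖ = 1 ∧ ∀ k : ZMod d, xt k = α * x k :=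
  no_unique_recovery_not_coprime_general d j hj x hx
end
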